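/- Let k_d ≥ 0 and let t_j ≤ t_C ≤ t_R be real numbers. Let e : ℝ → ℝ be continuous on [t_j, t_R] and differentiable on (t_C, t_R) with e'(t) ≥ −k_d for all t ∈ (t_C, t_R). Set e_res = e_min + k_d·(t_R − t_C). If e(t) ≥ e_res for all t ∈ [t_j, t_C] (the Reserve SoC Condition), then e(t) ≥ e_min for all t ∈ [t_j, t_R]. -/
import Mathlib

/-- Correctness of the eware subroutine: if the SoC `e` satisfies the Reserve
SoC Condition `e t ≥ e_res = e_min + k_d·(t_R - t_C)` throughout the candidate
trajectory `[t_j, t_C]`, is continuous on `[t_j, t_R]`, and is differentiable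
on the landing interval `(t_C, t_R)` with derivative bounded below by `-k_d`,
then the minimum-SoC constraint `e t ≥ e_min` holds on all of `[t_j, t_R]`. -/
theorem eware_min_soc (k_d : ℝ) (hk : 0 ≤ k_d) (t_j t_C t_R : ℝ)
    (hjC : t_j ≤ t_C) (hCR : t_C ≤ t_R) (e : ℝ → ℝ) (e_min e_res : ℝ)
    (hres_def : e_res = e_min + k_d * (t_R - t_C))
    (hcont : ContinuousOn e (Set.Icc t_j t_R))
    (hdiff : ∀ t ∈ Set.Ioo t_C t_R, DifferentiableAt ℝ e t)
    (hderiv : ∀ t ∈ Set.Ioo t_C t_R, deriv e t ≥ -k_d)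
    (hres : ∀ t ∈ Set.Icc t_j t_C, e t ≥ e_res) :
    ∀ t ∈ Set.Icc t_j t_R, e t ≥ e_min := by
  have hsub : Set.Icc t_C t_R ⊆ Set.Icc t_j t_R :=
    Set.Icc_subset_Icc hjC le_rfl
  -- g = e + k_d * id is monotone on [t_C, t_R]
  set g : ℝ → ℝ := fun t => e t + k_d * t with hg
  have hgmono : MonotoneOn g (Set.Icc t_C t_R) := by
    apply monotoneOn_of_deriv_nonneg (convex_Icc _ _)
    · exact ((hcont.mono hsub).add (continuousOn_const.mul continuousOn_id))
    · intro t ht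
      rw [interior_Icc] at ht
      exact ((hdiff t ht).add ((differentiable_const k_d |>.mul differentiable_id) t)).differentiableWithinAt
    · intro t ht
      rw [interior_Icc] at ht
      have hd : deriv g t = deriv e t + k_d := by
        rw [hg]
        have : deriv (fun t => e t + k_d * t) t
            = deriv e t + deriv (fun t => k_d * t) t :=
          deriv_add (hdiff t ht) (by fun_prop)
        rw [this, deriv_const_mul _ differentiable_id.differentiableAt]
        simp
      rw [hd]
      linarith [hderiv t ht]
  intro t ht
  rcases le_or_gt t t_C with h | h
  · have := hres t ⟨ht.1, h⟩
    have : k_d * (t_R - t_C) ≥ 0 := mul_nonneg hk (by linarith)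
    linarith [hres t ⟨ht.1, h⟩]
  · have hC : t_C ∈ Set.Icc t_C t_R := ⟨le_rfl, hCR⟩
    have ht' : t ∈ Set.Icc t_C t_R := ⟨h.le, ht.2⟩
    have := hgmono hC ht' h.le
    have heC := hres t_C ⟨hjC, le_rfl⟩
    have hkt : k_d * (t - t_C) ≤ k_d * (t_R - t_C) :=
      mul_le_mul_of_nonneg_left (by linarith [ht.2]) hk
    simp only [hg] at this
    nlinarith
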